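/- Let s be a standard episturmian sequence over an alphabet A with directive sequence Δ, such that at least 3 distinct letters occur in s and every letter occurring in s occurs infinitely often in Δ (that is, s is a strict episturmian, or Arnoux–Rauzy, sequence). Then s is not balanced. -/

import Mathlib

/-- The palindromic right closure `w⁽⁺⁾`: the shortest palindrome having `w` as a prefix. -/
def palClosure {A : Type*} [DecidableEq A] (w : List A) : List A :=
  w ++ (w.take (Nat.find (⟨w.length, by simp⟩ :
    ∃ i, (w.drop i).reverse = w.drop i))).reverse

/-- Iterated palindromic closure: `Pal ε = ε`, `Pal (w·x) = (Pal w · x)⁽⁺⁾`. -/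
def Pal {A : Type*} [DecidableEq A] (w : List A) : List A :=
  w.foldl (fun p x => palClosure (p ++ [x])) []

/-- `u` is a factor of the infinite word `s`. -/
def IsFactorOf {A : Type*} (u : List A) (s : ℕ → A) : Prop :=
  ∃ i : ℕ, u = (List.range u.length).map (fun j => s (i + j))

/-- `s` is balanced. -/
def IsBalanced {A : Type*} [DecidableEq A] (s : ℕ → A) : Prop :=
  ∀ u v : List A, IsFactorOf u s → IsFactorOf v s → u.length = v.length →
    ∀ a : A, u.count a ≤ v.count a + 1

/-- `u` is a prefix of the infinite word `s`. -/
def IsPrefixOf {A : Type*} (u : List A) (s : ℕ → A) : Prop :=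
  u = (List.range u.length).map s

/-- `s` is a standard episturmian sequence with directive sequence `Δ`. -/
def IsStdEpisturmian {A : Type*} [DecidableEq A] (s Δ : ℕ → A) : Prop :=
  ∀ n : ℕ, IsPrefixOf (Pal ((List.range n).map Δ)) s

/-- Concatenation of a finite word and an infinite word. -/
def wcat {A : Type*} (u : List A) (s : ℕ → A) : ℕ → A :=
  fun n => if h : n < u.length then u.get ⟨n, h⟩ else s (n - u.length)

/-- The constant infinite word `c^ω`. -/
def constW {A : Type*} (c : A) : ℕ → A := fun _ => c

/-- The purely periodic infinite word `w^ω` (`d` is a default letter, irrelevant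
when `w` is nonempty). -/
def perW {A : Type*} (w : List A) (d : A) : ℕ → A :=
  fun n => w.getD (n % w.length) d

/-- At least three distinct letters occur in `s`. -/
def ThreeLetters {A : Type*} (s : ℕ → A) : Prop :=
  ∃ a b c : A, a ≠ b ∧ a ≠ c ∧ b ≠ c ∧
    a ∈ Set.range s ∧ b ∈ Set.range s ∧ c ∈ Set.range s

section Aux
variable {A : Type*} [DecidableEq A]

lemma exists_palin (w : List A) : ∃ i, (w.drop i).reverse = w.drop i :=
  ⟨w.length, by simp⟩

lemma palClosure_def' (w : List A) :
    palClosure w = w ++ (w.take (Nat.find (exists_palin w))).reverse := rfl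

lemma palClosure_prefix (w : List A) : w <+: palClosure w :=
  ⟨_, rfl⟩

lemma palClosure_palindrome (w : List A) :
    (palClosure w).reverse = palClosure w := by
  rw [palClosure_def']
  have hspec := Nat.find_spec (exists_palin w)
  set i := Nat.find (exists_palin w) with hi
  rw [List.reverse_append, List.reverse_reverse]
  conv_lhs => rw [show w.reverse = List.drop i w ++ (List.take i w).reverse from by
    conv_lhs => rw [← List.take_append_drop i w]
    rw [List.reverse_append, hspec]]
  rw [← List.append_assoc, List.take_append_drop]

lemma palClosure_of_palindrome {w : List A} (h : w.reverse = w) :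
    palClosure w = w := by
  rw [palClosure_def']
  have : Nat.find (exists_palin w) = 0 :=
    (Nat.find_eq_zero _).mpr (by simpa using h)
  simp [this]

lemma palClosure_of_not_mem {w : List A} {z : A} (h : z ∉ w) :
    palClosure (w ++ [z]) = w ++ [z] ++ w.reverse := by
  rw [palClosure_def']
  have hfind : Nat.find (exists_palin (w ++ [z])) = w.length := by
    rw [Nat.find_eq_iff]
    refine ⟨by simp, ?_⟩
    intro i hi hP
    have hdrop : (w ++ [z]).drop i = w.drop i ++ [z] := by
      rw [List.drop_append_of_le_length (le_of_lt hi)]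
    rw [hdrop] at hP
    rcases hd : w.drop i with _ | ⟨b, t⟩
    · have := congrArg List.length hd
      simp at this; omega
    · rw [hd] at hP
      simp [List.reverse_append] at hP
      obtain ⟨hzb, -⟩ := hP
      exact h (List.mem_of_mem_drop (show z ∈ w.drop i by rw [hd]; simp [hzb]))
  rw [hfind]
  simp

lemma mem_palClosure {w : List A} {y : A} (h : y ∈ palClosure w) : y ∈ w := by
  rw [palClosure_def'] at h
  rcases List.mem_append.mp h with h | h
  · exact h
  · exact List.mem_of_mem_take (List.mem_reverse.mp h)

lemma Pal_append_singleton (w : List A) (y : A) :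
    Pal (w ++ [y]) = palClosure (Pal w ++ [y]) := by
  simp [Pal, List.foldl_append]

lemma Pal_palindrome (w : List A) : (Pal w).reverse = Pal w := by
  induction w using List.reverseRecOn with
  | nil => simp [Pal]
  | append_singleton w y ih =>
      rw [Pal_append_singleton]; exact palClosure_palindrome _

lemma mem_Pal {w : List A} {y : A} (h : y ∈ Pal w) : y ∈ w := by
  induction w using List.reverseRecOn with
  | nil => simpa [Pal] using h
  | append_singleton w x ih =>
      rw [Pal_append_singleton] at h
      rcases List.mem_append.mp (mem_palClosure h) with h | h
      · exact List.mem_append_left _ (ih h)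
      · exact List.mem_append_right _ h

lemma Pal_replicate (n : ℕ) (a : A) :
    Pal (List.replicate n a) = List.replicate n a := by
  induction n with
  | zero => simp [Pal]
  | succ n ih =>
      rw [List.replicate_succ' , Pal_append_singleton, ih,
        ← List.replicate_succ']
      exact palClosure_of_palindrome (by simp)

end Aux


section Aux2
variable {A : Type*} [DecidableEq A]

lemma Pal_range_succ (Δ : ℕ → A) (k : ℕ) :
    Pal ((List.range (k+1)).map Δ) =
      palClosure (Pal ((List.range k).map Δ) ++ [Δ k]) := by
  rw [List.range_succ, List.map_append]
  simpa using Pal_append_singleton ((List.range k).map Δ) (Δ k)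

lemma Pal_prefix_mono (Δ : ℕ → A) {k k' : ℕ} (h : k ≤ k') :
    Pal ((List.range k).map Δ) <+: Pal ((List.range k').map Δ) := by
  induction k' with
  | zero => simpa [Nat.le_zero.mp h]
  | succ k' ih =>
      rcases Nat.lt_or_ge k (k'+1) with h' | h'
      · refine List.IsPrefix.trans (ih (Nat.lt_succ_iff.mp h')) ?_
        rw [Pal_range_succ]
        exact List.IsPrefix.trans ⟨[Δ k'], rfl⟩ (palClosure_prefix _)
      · have : k = k' + 1 := le_antisymm h h'
        simp [this]

omit [DecidableEq A] in
lemma prefix_getElem {s : ℕ → A} {p : List A} (hp : IsPrefixOf p s)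
    {k : ℕ} (hk : k < p.length) : p[k] = s k := by
  have := List.getElem_of_eq hp hk
  simpa using this

omit [DecidableEq A] in
lemma isFactorOf_of_split {s : ℕ → A} {p l₁ u l₂ : List A}
    (hp : IsPrefixOf p s) (hsplit : p = l₁ ++ u ++ l₂) : IsFactorOf u s := by
  refine ⟨l₁.length, ?_⟩
  apply List.ext_getElem (by simp)
  intro j h1 h2
  have hlen : l₁.length + j < p.length := by
    subst hsplit; simp; omega
  subst hsplit
  have hps := prefix_getElem hp hlen
  simp only [List.getElem_map, List.getElem_range]
  have hu : u = ((l₁ ++ u ++ l₂).drop l₁.length).take u.length := by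
    rw [List.append_assoc, List.drop_left, List.take_left]
  rw [← hps]
  conv_lhs => rw [List.getElem_of_eq hu h1]
  simp only [List.getElem_take, List.getElem_drop]


lemma pick_z (a x a₀ b₀ c₀ : A) (hab : a₀ ≠ b₀) (hac : a₀ ≠ c₀) (hbc : b₀ ≠ c₀) :
    ∃ z, (z = a₀ ∨ z = b₀ ∨ z = c₀) ∧ z ≠ a ∧ z ≠ x := by
  by_cases h1 : a₀ ≠ a ∧ a₀ ≠ x
  · exact ⟨a₀, Or.inl rfl, h1⟩
  by_cases h2 : b₀ ≠ a ∧ b₀ ≠ x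
  · exact ⟨b₀, Or.inr (Or.inl rfl), h2⟩
  refine ⟨c₀, Or.inr (Or.inr rfl), ?_, ?_⟩ <;>
    (push_neg at h1 h2; by_cases ha : a₀ = a <;> by_cases hb : b₀ = a <;>
      first
        | (intro hc; subst_vars; simp_all)
        | (intro hc; apply hbc; rw [h2 hb, hc])
        | (intro hc; apply hac; rw [h1 ha, hc]))

end Aux2


/-- No strict standard episturmian (Arnoux–Rauzy) sequence over at least 3 letters is
balanced: if every letter occurring in `s` occurs infinitely often in its directive
sequence `Δ`, then `s` is not balanced. -/
theorem arnoux_rauzy_not_balanced {A : Type*} [DecidableEq A] (s Δ : ℕ → A)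
    (hepi : IsStdEpisturmian s Δ) (h3 : ThreeLetters s)
    (hstrict : ∀ a ∈ Set.range s, ∀ N : ℕ, ∃ n ≥ N, Δ n = a) :
    ¬ IsBalanced s := by
  intro hbal
  obtain ⟨a₀, b₀, c₀, hab, hac, hbc, ha₀, hb₀, hc₀⟩ := h3
  have hex : ∃ k, Δ k ≠ Δ 0 := by
    by_cases h : a₀ = Δ 0
    · obtain ⟨k, -, hk⟩ := hstrict b₀ hb₀ 0
      exact ⟨k, by rw [hk, ← h]; exact fun e => hab e.symm⟩
    · obtain ⟨k, -, hk⟩ := hstrict a₀ ha₀ 0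
      exact ⟨k, by rw [hk]; exact h⟩
  set a := Δ 0 with ha_def
  set n := Nat.find hex with hn_def
  have hnspec : Δ n ≠ a := Nat.find_spec hex
  have hlt : ∀ i, i < n → Δ i = a := fun i hi => not_not.mp (Nat.find_min hex hi)
  have hn1 : 1 ≤ n := by
    rcases Nat.eq_zero_or_pos n with h | h
    · exact absurd (h ▸ hnspec) (by simp [ha_def])
    · exact h
  set x := Δ n with hx_def
  have hxa : x ≠ a := hnspec
  set R := List.replicate n a with hR_def
  have hlenR : R.length = n := by simp [hR_def]
  have hmapn : (List.range n).map Δ = R := by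
    rw [hR_def]
    refine List.eq_replicate_iff.mpr ⟨by simp, ?_⟩
    intro b hb
    simp only [List.mem_map, List.mem_range] at hb
    obtain ⟨i, hi, rfl⟩ := hb
    exact hlt i hi
  have hpn : Pal ((List.range n).map Δ) = R := by rw [hmapn, hR_def, Pal_replicate]
  have hxnotR : x ∉ R := by
    intro hx
    exact hxa ((List.mem_replicate.mp (hR_def ▸ hx)).2)
  have hRrev : R.reverse = R := by simp [hR_def]
  have hpn1 : Pal ((List.range (n+1)).map Δ) = R ++ [x] ++ R := by
    rw [Pal_range_succ, hpn, ← hx_def, palClosure_of_not_mem hxnotR, hRrev]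
  -- s n = x
  have hsn : s n = x := by
    have hp : IsPrefixOf (R ++ [x] ++ R) s := hpn1 ▸ hepi (n+1)
    have hk : n < (R ++ [x] ++ R).length := by simp [hlenR]
    rw [← prefix_getElem hp hk]
    rw [List.getElem_append_left (by simp [hlenR]),
      List.getElem_append_right (by simp [hlenR])]
    simp [hlenR]
  obtain ⟨z, hzmem, hza, hzx⟩ := pick_z a x a₀ b₀ c₀ hab hac hbc
  have hzr : z ∈ Set.range s := by rcases hzmem with rfl | rfl | rfl <;> assumption
  -- factor W1 = x aⁿ x
  obtain ⟨m', hm'ge, hm'x⟩ := hstrict x ⟨n, hsn⟩ (n+1)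
  set pm' := Pal ((List.range m').map Δ) with hpm'_def
  have hpref : (R ++ [x] ++ R) <+: pm' := by
    rw [← hpn1, hpm'_def]; exact Pal_prefix_mono Δ hm'ge
  obtain ⟨r, hr⟩ := hpref
  have hpm'pal : pm'.reverse = pm' := Pal_palindrome _
  have hsuf : pm' = r.reverse ++ (R ++ [x] ++ R) := by
    rw [← hpm'pal, ← hr]
    simp [List.reverse_append, hRrev, List.append_assoc]
  have hnext : Pal ((List.range (m'+1)).map Δ) = palClosure (pm' ++ [x]) := by
    rw [Pal_range_succ, hm'x, hpm'_def]
  obtain ⟨rest, hrest⟩ := palClosure_prefix (pm' ++ [x])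
  set W1 : List A := x :: (R ++ [x]) with hW1_def
  have hsplit1 : Pal ((List.range (m'+1)).map Δ) = (r.reverse ++ R) ++ W1 ++ rest := by
    rw [hnext, ← hrest, hsuf, hW1_def]
    simp [List.append_assoc]
  have hfac1 : IsFactorOf W1 s := isFactorOf_of_split (hepi (m'+1)) hsplit1
  -- factor W2 = aⁿ z a
  have hzex : ∃ k, Δ k = z := by
    obtain ⟨k, -, hk⟩ := hstrict z hzr 0; exact ⟨k, hk⟩
  set m := Nat.find hzex with hm_def
  have hmz : Δ m = z := Nat.find_spec hzex
  have hmgt : n < m := by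
    rcases Nat.lt_or_ge n m with h | h
    · exact h
    exfalso
    rcases Nat.lt_or_ge m n with h' | h'
    · exact hza ((hlt m h') ▸ hmz.symm)
    · have : m = n := le_antisymm h h'
      exact hzx ((this ▸ hmz).symm ▸ rfl)
  set pm := Pal ((List.range m).map Δ) with hpm_def
  have hznotin : z ∉ pm := by
    intro hz
    have h' := mem_Pal hz
    simp only [List.mem_map, List.mem_range] at h'
    obtain ⟨i, hi, hiz⟩ := h'
    exact Nat.find_min hzex hi hiz
  have hpmpal : pm.reverse = pm := Pal_palindrome _
  have hpmpref : R <+: pm := by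
    rw [← hpn, hpm_def]; exact Pal_prefix_mono Δ (le_of_lt hmgt)
  obtain ⟨r₂, hr₂⟩ := hpmpref
  have hpmsuf : pm = r₂.reverse ++ R := by
    rw [← hpmpal, ← hr₂]
    simp [List.reverse_append, hRrev]
  have hRcons : R = a :: List.replicate (n-1) a := by
    rw [hR_def, show n = n-1+1 from by omega, List.replicate_succ]
    simp
  have hpmcons : pm = a :: (List.replicate (n-1) a ++ r₂) := by
    rw [← hr₂, hRcons]; simp
  have hpm1 : Pal ((List.range (m+1)).map Δ) = pm ++ [z] ++ pm := by
    rw [Pal_range_succ, hmz, ← hpm_def, palClosure_of_not_mem hznotin, hpmpal]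
  set W2 : List A := R ++ [z, a] with hW2_def
  have hsplit2 : Pal ((List.range (m+1)).map Δ) =
      r₂.reverse ++ W2 ++ (List.replicate (n-1) a ++ r₂) := by
    rw [hpm1]
    nth_rw 2 [hpmcons]
    nth_rw 1 [hpmsuf]
    rw [hW2_def]
    simp [List.append_assoc]
  have hfac2 : IsFactorOf W2 s := isFactorOf_of_split (hepi (m+1)) hsplit2
  have hlen : W1.length = W2.length := by
    simp [hW1_def, hW2_def, hlenR]
  have hb := hbal W1 W2 hfac1 hfac2 hlen x
  have h1 : W1.count x = 2 := by
    simp [hW1_def, hR_def, List.count_cons, List.count_append,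
      List.count_replicate, hxa, Ne.symm hxa]
  have h2 : W2.count x = 0 := by
    simp [hW2_def, hR_def, List.count_cons, List.count_append,
      List.count_replicate, hxa, Ne.symm hxa, hzx]
  omega
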